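/- Proximal Newton descent direction lemma: let f = g + h where g : ℝⁿ → ℝ is twice continuously differentiable and h : ℝⁿ → ℝ is convex. Let H be a symmetric positive definite matrix, let x̂ minimize the model m(x) = g(x₀) + ∇g(x₀)ᵀ(x − x₀) + ½(x − x₀)ᵀH(x − x₀) + h(x), and set Δ = x̂ − x₀. Then for t ∈ (0,1], f(x₀ + tΔ) ≤ f(x₀) − t ΔᵀHΔ + o(t) as t → 0⁺; in particular if Δ ≠ 0 there exists t > 0 with f(x₀ + tΔ) < f(x₀). -/

import Mathlib

/-!
Plugging `x₀ + t • Δ`, `t ∈ (0, 1)`, into the minimality of `x̂` for the model and bounding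
`h (x₀ + t • Δ)` by convexity gives `∇g(x₀)ᵀΔ + h x̂ - h x₀ + (1 + t)/2 · ΔᵀHΔ ≤ 0`; letting
`t → 1` yields `∇g(x₀)ᵀΔ + h x̂ - h x₀ ≤ -ΔᵀHΔ` (Lee–Sun–Saunders, Prop. 2.3). Convexity of `h`
along the segment and the first-order expansion of `g` at `x₀` then give the descent bound with
remainder `g (x₀ + t • Δ) - g x₀ - t ∇g(x₀)ᵀΔ = o(t)`, which is eventually below `t/2 · ΔᵀHΔ`.
-/

open Filter Asymptotics Topology Set

section Convex

variable {E : Type*} [AddCommGroup E] [Module ℝ E]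

theorem ConvexOn.apply_add_smul_sub_le {s : Set E} {f : E → ℝ} (hf : ConvexOn ℝ s f)
    {x y : E} (hx : x ∈ s) (hy : y ∈ s) {t : ℝ} (ht₀ : 0 ≤ t) (ht₁ : t ≤ 1) :
    f (x + t • (y - x)) ≤ f x + t * (f y - f x) := by
  have hseg : (1 - t) • x + t • y = x + t • (y - x) := by module
  have := hf.2 hx hy (sub_nonneg.mpr ht₁) ht₀ (by ring)
  rw [hseg, smul_eq_mul, smul_eq_mul] at this
  linarith

/-- The model `m` of `g + h` at `x₀` with `ℓ = ∇g(x₀)ᵀ` and `Q v = vᵀHv`, minus the constant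
`g x₀`. -/
noncomputable def proxModel (ℓ : E →ₗ[ℝ] ℝ) (Q : QuadraticForm ℝ E) (h : E → ℝ) (x₀ x : E) : ℝ :=
  ℓ (x - x₀) + (1 / 2) * Q (x - x₀) + h x

theorem ConvexOn.le_neg_of_isMinOn_proxModel {ℓ : E →ₗ[ℝ] ℝ} {Q : QuadraticForm ℝ E}
    {h : E → ℝ} (hh : ConvexOn ℝ univ h) {x₀ xhat : E}
    (hmin : IsMinOn (proxModel ℓ Q h x₀) univ xhat) :
    ℓ (xhat - x₀) + (h xhat - h x₀) ≤ -Q (xhat - x₀) := by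
  set Δ := xhat - x₀
  have hsegment : ∀ t ∈ Ioo (0 : ℝ) 1, ℓ Δ + (h xhat - h x₀) + (1 + t) / 2 * Q Δ ≤ 0 := by
    rintro t ⟨ht₀, ht₁⟩
    have hmodel := isMinOn_univ_iff.mp hmin (x₀ + t • Δ)
    simp only [proxModel, add_sub_cancel_left, map_smul, QuadraticMap.map_smul, smul_eq_mul]
      at hmodel
    have hconv := hh.apply_add_smul_sub_le (mem_univ x₀) (mem_univ xhat) ht₀.le ht₁.le
    have hscaled : (1 - t) * (ℓ Δ + (h xhat - h x₀) + (1 + t) / 2 * Q Δ) ≤ 0 := by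
      nlinarith
    exact nonpos_of_mul_nonpos_right hscaled (by linarith)
  have hlim : Tendsto (fun t : ℝ => ℓ Δ + (h xhat - h x₀) + (1 + t) / 2 * Q Δ) (𝓝[<] 1)
      (𝓝 (ℓ Δ + (h xhat - h x₀) + Q Δ)) := by
    refine tendsto_nhdsWithin_of_tendsto_nhds (Continuous.tendsto' ?_ 1 _ (by ring))
    fun_prop
  have hle := le_of_tendsto hlim (eventually_of_mem (Ioo_mem_nhdsLT zero_lt_one) hsegment)
  linarith

theorem ConvexOn.add_le_sub_mul_add_remainder {g h : E → ℝ} (hh : ConvexOn ℝ univ h)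
    {x₀ xhat : E} {A B : ℝ} (hdir : A + (h xhat - h x₀) ≤ -B) :
    ∀ t : ℝ, 0 < t → t ≤ 1 → g (x₀ + t • (xhat - x₀)) + h (x₀ + t • (xhat - x₀))
      ≤ g x₀ + h x₀ - t * B + (g (x₀ + t • (xhat - x₀)) - g x₀ - t * A) := by
  intro t ht₀ ht₁
  have hconv := hh.apply_add_smul_sub_le (mem_univ x₀) (mem_univ xhat) ht₀.le ht₁
  linarith [mul_le_mul_of_nonneg_left hdir ht₀.le]

end Convex

theorem exists_lt_of_le_sub_mul_add_isLittleO {F φ : ℝ → ℝ} {c B : ℝ} (hB : 0 < B)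
    (hφ : φ =o[𝓝[>] 0] fun t => t) (hF : ∀ t, 0 < t → t ≤ 1 → F t ≤ c - t * B + φ t) :
    ∃ t, 0 < t ∧ F t < c := by
  have hsmall : ∀ᶠ t in 𝓝[>] 0, ‖φ t‖ ≤ B / 2 * ‖t‖ := hφ.def (by positivity)
  have hle_one : ∀ᶠ t : ℝ in 𝓝[>] 0, t ≤ 1 :=
    nhdsWithin_le_nhds (Iic_mem_nhds zero_lt_one)
  obtain ⟨t, hφt, ht₁, ht₀ : 0 < t⟩ := (hsmall.and (hle_one.and self_mem_nhdsWithin)).exists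
  rw [Real.norm_eq_abs, Real.norm_eq_abs, abs_of_pos ht₀] at hφt
  exact ⟨t, ht₀, by nlinarith [hF t ht₀ ht₁, le_abs_self (φ t)]⟩

theorem Matrix.toQuadraticForm'_apply {n : Type*} [Fintype n] [DecidableEq n]
    (H : Matrix n n ℝ) (v : n → ℝ) : H.toQuadraticForm' v = dotProduct v (H.mulVec v) := by
  simp [Matrix.toQuadraticForm', Matrix.toLinearMap₂'_apply', Matrix.dotProduct_mulVec]

theorem proximal_newton_descent_general (n : ℕ)
    (g h : (Fin n → ℝ) → ℝ) (hg : ContDiff ℝ 2 g) (hh : ConvexOn ℝ Set.univ h)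
    (H : Matrix (Fin n) (Fin n) ℝ) (hHpd : H.PosDef)
    (x₀ xhat : Fin n → ℝ)
    (hmin : ∀ x, g x₀ + fderiv ℝ g x₀ (xhat - x₀)
        + (1 / 2) * dotProduct (xhat - x₀) (H.mulVec (xhat - x₀)) + h xhat
      ≤ g x₀ + fderiv ℝ g x₀ (x - x₀)
        + (1 / 2) * dotProduct (x - x₀) (H.mulVec (x - x₀)) + h x) :
    (∃ φ : ℝ → ℝ, φ =o[nhdsWithin 0 (Set.Ioi 0)] (fun t : ℝ => t) ∧
      ∀ t : ℝ, 0 < t → t ≤ 1 →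
        g (x₀ + t • (xhat - x₀)) + h (x₀ + t • (xhat - x₀))
          ≤ g x₀ + h x₀ - t * dotProduct (xhat - x₀) (H.mulVec (xhat - x₀)) + φ t)
    ∧ (xhat - x₀ ≠ 0 → ∃ t : ℝ, 0 < t ∧
        g (x₀ + t • (xhat - x₀)) + h (x₀ + t • (xhat - x₀)) < g x₀ + h x₀) := by
  set Δ := xhat - x₀
  have hmodel : IsMinOn (proxModel (fderiv ℝ g x₀ : _ →ₗ[ℝ] ℝ) H.toQuadraticForm' h x₀)
      univ xhat := isMinOn_univ_iff.mpr fun x => by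
    simp only [proxModel, ContinuousLinearMap.coe_coe, Matrix.toQuadraticForm'_apply]
    linarith [hmin x]
  have hdir := hh.le_neg_of_isMinOn_proxModel hmodel
  rw [ContinuousLinearMap.coe_coe, Matrix.toQuadraticForm'_apply] at hdir
  have hφ : (fun t : ℝ => g (x₀ + t • Δ) - g x₀ - t * fderiv ℝ g x₀ Δ) =o[𝓝[>] 0] fun t => t :=
    (hasLineDerivAt_iff_isLittleO_nhds_zero.mp
      ((hg.differentiable two_ne_zero x₀).hasFDerivAt.hasLineDerivAt Δ)).mono nhdsWithin_le_nhds
  have hdescent := hh.add_le_sub_mul_add_remainder (g := g) hdir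
  exact ⟨⟨_, hφ, hdescent⟩, fun hΔ =>
    exists_lt_of_le_sub_mul_add_isLittleO (hHpd.dotProduct_mulVec_pos hΔ) hφ hdescent⟩

/-- Proximal Newton descent direction lemma: if x̂ minimizes the quadratic model of
f = g + h at x₀ built from the gradient of g and a symmetric positive definite H, and
Δ = x̂ − x₀, then for t ∈ (0,1], f(x₀ + tΔ) ≤ f(x₀) − t ΔᵀHΔ + o(t); in particular if
Δ ≠ 0 there is t > 0 with f(x₀ + tΔ) < f(x₀). -/
theorem proximal_newton_descent (n : ℕ)
    (g h : (Fin n → ℝ) → ℝ) (hg : ContDiff ℝ 2 g) (hh : ConvexOn ℝ Set.univ h)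
    (H : Matrix (Fin n) (Fin n) ℝ) (hHsymm : H.IsSymm) (hHpd : H.PosDef)
    (x₀ xhat : Fin n → ℝ)
    (hmin : ∀ x, g x₀ + fderiv ℝ g x₀ (xhat - x₀)
        + (1 / 2) * dotProduct (xhat - x₀) (H.mulVec (xhat - x₀)) + h xhat
      ≤ g x₀ + fderiv ℝ g x₀ (x - x₀)
        + (1 / 2) * dotProduct (x - x₀) (H.mulVec (x - x₀)) + h x) :
    (∃ φ : ℝ → ℝ, φ =o[nhdsWithin 0 (Set.Ioi 0)] (fun t : ℝ => t) ∧
      ∀ t : ℝ, 0 < t → t ≤ 1 →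
        g (x₀ + t • (xhat - x₀)) + h (x₀ + t • (xhat - x₀))
          ≤ g x₀ + h x₀ - t * dotProduct (xhat - x₀) (H.mulVec (xhat - x₀)) + φ t)
    ∧ (xhat - x₀ ≠ 0 → ∃ t : ℝ, 0 < t ∧
        g (x₀ + t • (xhat - x₀)) + h (x₀ + t • (xhat - x₀)) < g x₀ + h x₀) :=
  proximal_newton_descent_general n g h hg hh H hHpd x₀ xhat hmin
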